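/- Let π > 0 and π̂_{r+1},…,π̂_p be real numbers with π + π̂_k > 0 for all k ∈ {r+1,…,p}. For u ≥ 0, the iterated integral of e^{−π̂_{r+1}(x_{r+1}−u)} · e^{−π̂_{r+2}(x_{r+2}−x_{r+1})} ⋯ e^{−π̂_p(x_p−x_{p−1})} · e^{−π x_p} over the ordered region u < x_{r+1} < x_{r+2} < ⋯ < x_p equals e^{−πu} · ∏_{k=r+1}^p 1/(π + π̂_k). -/

import Mathlib

open MeasureTheory

/-!
Peel off the first free coordinate. By Tonelli, integrating first over `x_{r+2}, …, x_p` with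
`x_{r+1} = a` fixed gives, by induction, `e^{-π a} ∏_{k=r+2}^p 1/(π + π̂_k)`; what is left is
`∫_u^∞ e^{-π̂_{r+1}(a-u)} e^{-π a} da = e^{-π u}/(π + π̂_{r+1})`, finite because
`π + π̂_{r+1} > 0`. Working with lower Lebesgue integrals makes integrability automatic.
-/

section

open Real Set

theorem measurable_fin_cons {α : Type*} [MeasurableSpace α] {n : ℕ} (u : α) :
    Measurable fun x : Fin n → α => (Fin.cons u x : Fin (n + 1) → α) :=
  measurable_pi_iff.2 fun j => Fin.cases (by simp)
    (fun i => by simp [measurable_pi_apply]) j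

theorem lintegral_fin_succ_eq_lintegral_cons {α : Type*} [MeasureSpace α]
    [SigmaFinite (volume : Measure α)] {n : ℕ} {f : (Fin (n + 1) → α) → ENNReal}
    (hf : Measurable f) :
    ∫⁻ x, f x = ∫⁻ a, ∫⁻ y, f (Fin.cons a y) := by
  let e := MeasurableEquiv.piFinSuccAbove (fun _ : Fin (n + 1) => α) 0
  rw [← (volume_preserving_piFinSuccAbove _ 0).symm.lintegral_comp_emb e.symm.measurableEmbedding,
    Measure.volume_eq_prod,
    lintegral_prod (fun q => f (e.symm q)) (hf.comp e.symm.measurable).aemeasurable]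
  simp only [e, MeasurableEquiv.piFinSuccAbove_symm_apply, Fin.insertNthEquiv_zero]
  rfl

theorem lintegral_Ioi_exp_mul_exp {p c : ℝ} (hpc : 0 < p + c) (u : ℝ) :
    ∫⁻ a in Ioi u, ENNReal.ofReal (exp (-c * (a - u)) * exp (-p * a))
      = ENNReal.ofReal (exp (-p * u) / (p + c)) := by
  have hsplit : ∀ a, exp (-c * (a - u)) * exp (-p * a) = exp (c * u) * exp (-(p + c) * a) :=
    fun a => by rw [← exp_add, ← exp_add]; ring_nf
  simp_rw [hsplit]
  rw [← ofReal_integral_eq_lintegral_ofReal ((exp_neg_integrableOn_Ioi u hpc).const_mul _)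
      (.of_forall fun _ => by positivity), integral_const_mul,
    integral_exp_mul_Ioi (by linarith), neg_div_neg_eq, mul_div_assoc', ← exp_add]
  ring_nf

/-- The weight of the path `z = (x_r, x_{r+1}, …, x_p)`, with `c k` the rate of its `k`-th step
`x_{r+k} → x_{r+k+1}` and `p` the rate of the final factor `e^{-p x_p}`. -/
noncomputable def expChainWeight (p : ℝ) (c : ℕ → ℝ) {n : ℕ} (z : Fin (n + 1) → ℝ) :
    ℝ :=
  if StrictMono z then
    (∏ k : Fin n, exp (-c k * (z k.succ - z k.castSucc))) * exp (-p * z (Fin.last n))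
  else 0

theorem expChainWeight_nonneg (p : ℝ) (c : ℕ → ℝ) {n : ℕ} (z : Fin (n + 1) → ℝ) :
    0 ≤ expChainWeight p c z := by
  unfold expChainWeight; split_ifs <;> positivity

theorem measurable_expChainWeight (p : ℝ) (c : ℕ → ℝ) (n : ℕ) :
    Measurable (expChainWeight p c : (Fin (n + 1) → ℝ) → ℝ) := by
  have hset : {z : Fin (n + 1) → ℝ | StrictMono z}
      = ⋂ i : Fin n, {z | z i.castSucc < z i.succ} := by
    ext z; simp [Fin.strictMono_iff_lt_succ]
  refine Measurable.ite ?_ (by fun_prop) measurable_const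
  rw [hset]
  exact .iInter fun i => measurableSet_lt (measurable_pi_apply _) (measurable_pi_apply _)

theorem expChainWeight_cons (p : ℝ) (c : ℕ → ℝ) {n : ℕ} (u : ℝ)
    (z : Fin (n + 1) → ℝ) :
    expChainWeight p c (Fin.cons u z : Fin (n + 2) → ℝ)
      = (Ioi u).indicator (fun a => exp (-c 0 * (a - u))) (z 0)
        * expChainWeight p (fun k => c (k + 1)) z := by
  have hmono : StrictMono (Fin.cons u z : Fin (n + 2) → ℝ) ↔ u < z 0 ∧ StrictMono z :=
    strictMono_vecCons
  unfold expChainWeight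
  by_cases hu : u < z 0 <;> by_cases hz : StrictMono z <;>
    simp [hmono, hu, hz, Fin.prod_univ_succ, ← Fin.succ_last]
  ring

theorem lintegral_expChainWeight_cons (p : ℝ) {n : ℕ} {c : ℕ → ℝ}
    (hc : ∀ k < n, 0 < p + c k) (u : ℝ) :
    ∫⁻ x : Fin n → ℝ, .ofReal (expChainWeight p c (Fin.cons u x : Fin (n + 1) → ℝ))
      = ENNReal.ofReal (exp (-p * u) * ∏ k ∈ Finset.range n, 1 / (p + c k)) := by
  induction n generalizing c u with
  | zero =>
    rw [Measure.volume_pi_eq_dirac, lintegral_dirac]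
    simp [expChainWeight, Subsingleton.strictMono]
  | succ n ih =>
    have hc0 : 0 < p + c 0 := hc 0 n.succ_pos
    have hrest : ∀ k < n, 0 < p + c (k + 1) := fun k hk => hc (k + 1) (by omega)
    have hmeas : Measurable fun x : Fin (n + 1) → ℝ =>
        ENNReal.ofReal (expChainWeight p c (Fin.cons u x : Fin (n + 2) → ℝ)) :=
      ENNReal.measurable_ofReal.comp
        ((measurable_expChainWeight p c _).comp (measurable_fin_cons u))
    set P := ∏ k ∈ Finset.range n, 1 / (p + c (k + 1))
    calc ∫⁻ x : Fin (n + 1) → ℝ,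
          .ofReal (expChainWeight p c (Fin.cons u x : Fin (n + 2) → ℝ))
        = ∫⁻ a, ENNReal.ofReal ((Ioi u).indicator (fun a => exp (-c 0 * (a - u))) a)
            * ENNReal.ofReal (exp (-p * a) * P) := by
          rw [lintegral_fin_succ_eq_lintegral_cons hmeas]
          refine lintegral_congr fun a => ?_
          simp_rw [expChainWeight_cons, Fin.cons_zero,
            ENNReal.ofReal_mul (indicator_nonneg (fun _ _ => (exp_pos _).le) _)]
          rw [lintegral_const_mul' _ _ ENNReal.ofReal_ne_top, ih hrest]
      _ = (∫⁻ a in Ioi u, .ofReal (exp (-c 0 * (a - u)) * exp (-p * a))) * .ofReal P := by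
          rw [← lintegral_indicator measurableSet_Ioi,
            ← lintegral_mul_const' _ _ ENNReal.ofReal_ne_top]
          refine lintegral_congr fun a => ?_
          by_cases ha : a ∈ Ioi u
          · rw [indicator_of_mem ha, indicator_of_mem ha, ENNReal.ofReal_mul (exp_pos _).le,
              ENNReal.ofReal_mul (exp_pos _).le, mul_assoc]
          · simp [ha]
      _ = _ := by
          rw [lintegral_Ioi_exp_mul_exp hc0, ← ENNReal.ofReal_mul (by positivity),
            Finset.prod_range_succ']
          congr 1
          ring

theorem integral_expChainWeight_cons (p : ℝ) {n : ℕ} {c : ℕ → ℝ}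
    (hc : ∀ k < n, 0 < p + c k) (u : ℝ) :
    ∫ x : Fin n → ℝ, expChainWeight p c (Fin.cons u x : Fin (n + 1) → ℝ)
      = exp (-p * u) * ∏ k ∈ Finset.range n, 1 / (p + c k) := by
  rw [integral_eq_lintegral_of_nonneg_ae (.of_forall fun _ => expChainWeight_nonneg _ _ _)
      ((measurable_expChainWeight p c n).comp (measurable_fin_cons u)).aestronglyMeasurable,
    lintegral_expChainWeight_cons p hc, ENNReal.toReal_ofReal]
  exact mul_nonneg (exp_pos _).le
    (Finset.prod_nonneg fun k hk => (one_div_pos.2 (hc k (Finset.mem_range.1 hk))).le)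

end

theorem psi_r_p_plus_one_general (r m : ℕ) (π : ℝ) (πh : ℕ → ℝ)
    (h : ∀ k ∈ Finset.Icc (r + 1) (r + m + 1), 0 < π + πh k)
    (u : ℝ) :
    (∫ x : Fin (m + 1) → ℝ,
      Set.indicator {x : Fin (m + 1) → ℝ | StrictMono (Fin.cons u x : Fin (m + 2) → ℝ)}
        (fun x =>
          (∏ k : Fin (m + 1),
            Real.exp (-(πh (r + 1 + k.val)) *
              ((Fin.cons u x : Fin (m + 2) → ℝ) k.succ -
               (Fin.cons u x : Fin (m + 2) → ℝ) k.castSucc))) *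
          Real.exp (-π * x (Fin.last m))) x)
    = Real.exp (-π * u) * ∏ k ∈ Finset.Icc (r + 1) (r + m + 1), 1 / (π + πh k) := by
  have hc : ∀ k < m + 1, 0 < π + πh (r + 1 + k) :=
    fun k hk => h _ (Finset.mem_Icc.2 ⟨by omega, by omega⟩)
  have hreindex : ∏ k ∈ Finset.Icc (r + 1) (r + m + 1), 1 / (π + πh k)
      = ∏ k ∈ Finset.range (m + 1), 1 / (π + πh (r + 1 + k)) := by
    rw [← Finset.Ico_add_one_right_eq_Icc, Finset.prod_Ico_eq_prod_range,
      show r + m + 1 + 1 - (r + 1) = m + 1 by omega]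
  rw [hreindex, ← integral_expChainWeight_cons π hc u]
  congr with x
  simp only [expChainWeight, Set.indicator_apply, Set.mem_ofPred_eq, ← Fin.succ_last,
    Fin.cons_succ]

/-- Explicit formula for `Ψ_{r,p+1}(u, π)`: the iterated convolution of the
exponential kernels `e^{-πh_k(x_k - x_{k-1})}` over the ordered region
`u < x_{r+1} < ⋯ < x_p`, against `e^{-π x_p}`, equals
`e^{-π u} ∏_{k=r+1}^p 1/(π + πh k)`.  Here `p = r + m + 1`. -/
theorem psi_r_p_plus_one (r m : ℕ) (π : ℝ) (hπ : 0 < π) (πh : ℕ → ℝ)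
    (h : ∀ k ∈ Finset.Icc (r + 1) (r + m + 1), 0 < π + πh k)
    (u : ℝ) (hu : 0 ≤ u) :
    (∫ x : Fin (m + 1) → ℝ,
      Set.indicator {x : Fin (m + 1) → ℝ | StrictMono (Fin.cons u x : Fin (m + 2) → ℝ)}
        (fun x =>
          (∏ k : Fin (m + 1),
            Real.exp (-(πh (r + 1 + k.val)) *
              ((Fin.cons u x : Fin (m + 2) → ℝ) k.succ -
               (Fin.cons u x : Fin (m + 2) → ℝ) k.castSucc))) *
          Real.exp (-π * x (Fin.last m))) x)
    = Real.exp (-π * u) * ∏ k ∈ Finset.Icc (r + 1) (r + m + 1), 1 / (π + πh k) :=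
  psi_r_p_plus_one_general r m π πh h u
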